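/- arXiv:math/0702248 — 3 statements merged into one kernel-verified Lean document; each statement's English description precedes it below -/
import Mathlib

section
/- For a strictly positive square matrix A with spectral radius ρ, the rescaled powers ρ^{-n} A^n converge (entrywise) to a rank-one matrix with all entries strictly positive. -/
/-!
Maximizing the Collatz–Wielandt number `max {t | t • x ≤ A x}` over the standard simplex gives an
eigenvector `v` with strictly positive entries and an eigenvalue `r > 0`: at a maximizer `x`, if
`r • x ≠ A x` then `A (A x - r • x)` is strictly positive, and `A x` does strictly better than `x`.
Comparing `|y|` with `v` for a complex eigenvector `y` bounds every eigenvalue modulus by `r`,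
so `r = ρ`.

Conjugating by `diagonal v` turns `r⁻¹ • A` into a row-stochastic matrix `P` with entries at least
some `δ > 0`. Multiplication by `P` shrinks the oscillation `max - min` of a vector by the factor
`1 - δ`, while the minimum increases and the maximum decreases, so every column of `Pⁿ` converges
to a constant positive vector: `Pⁿ → 1 πᵀ`. Conjugating back, `ρ⁻ⁿ Aⁿ → v (π / v)ᵀ`.
-/

open Filter Matrix Finset Topology

theorem ne_zero_of_mem_stdSimplex {ι : Type*} [Fintype ι] {x : ι → ℝ} (hx : x ∈ stdSimplex ℝ ι) :
    x ≠ 0 := by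
  rintro rfl
  simp [stdSimplex] at hx

namespace Matrix

variable {ι κ : Type*} [Fintype ι]

theorem mulVec_mono_of_nonneg {A : Matrix κ ι ℝ} (hA : ∀ i j, 0 ≤ A i j) {x y : ι → ℝ}
    (hxy : x ≤ y) : A *ᵥ x ≤ A *ᵥ y := fun i =>
  sum_le_sum fun j _ => mul_le_mul_of_nonneg_left (hxy j) (hA i j)

theorem mulVec_pos_of_pos {A : Matrix κ ι ℝ} (hA : ∀ i j, 0 < A i j) {x : ι → ℝ} (hx : 0 ≤ x)
    (hx0 : x ≠ 0) (i : κ) : 0 < (A *ᵥ x) i := by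
  obtain ⟨j, hj⟩ := Function.ne_iff.mp hx0
  exact sum_pos' (fun k _ => mul_nonneg (hA i k).le (hx k))
    ⟨j, mem_univ j, mul_pos (hA i j) ((hx j).lt_of_ne' hj)⟩

theorem norm_map_ofReal_mulVec_le {A : Matrix κ ι ℝ} (hA : ∀ i j, 0 ≤ A i j) (x : ι → ℂ) (i : κ) :
    ‖(A.map (fun a => (a : ℂ)) *ᵥ x) i‖ ≤ (A *ᵥ fun j => ‖x j‖) i := by
  refine (norm_sum_le _ _).trans_eq (sum_congr rfl fun j _ => ?_)
  simp [Complex.norm_real, abs_of_nonneg (hA i j)]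

theorem le_eigenvalue_of_smul_le_mulVec {A : Matrix ι ι ℝ} (hA : ∀ i j, 0 ≤ A i j) {r : ℝ}
    {v : ι → ℝ} (hv : ∀ i, 0 < v i) (hAv : A *ᵥ v = r • v) {t : ℝ} {w : ι → ℝ} (hw : 0 ≤ w)
    (hw0 : w ≠ 0) (htw : t • w ≤ A *ᵥ w) : t ≤ r := by
  obtain ⟨j, hj⟩ := Function.ne_iff.mp hw0
  have : Nonempty ι := ⟨j⟩
  obtain ⟨i, hi⟩ := Finite.exists_max fun k => w k / v k
  have hwv : w ≤ (w i / v i) • v := fun k => by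
    simpa [div_le_iff₀ (hv k)] using hi k
  have hwi : 0 < w i := by
    have := (div_pos ((hw j).lt_of_ne' hj) (hv j)).trans_le (hi j)
    exact (div_pos_iff_of_pos_right (hv i)).mp this
  refine le_of_mul_le_mul_right ?_ hwi
  calc t * w i ≤ (A *ᵥ w) i := htw i
    _ ≤ (A *ᵥ ((w i / v i) • v)) i := mulVec_mono_of_nonneg hA hwv i
    _ = r * w i := by
      rw [mulVec_smul, hAv]
      simp only [Pi.smul_apply, smul_eq_mul]
      field_simp [(hv i).ne']

theorem exists_mulVec_eq_smul_of_mem_spectrum [DecidableEq ι] {A : Matrix ι ι ℂ} {z : ℂ}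
    (hz : z ∈ spectrum ℂ A) : ∃ x ≠ 0, A *ᵥ x = z • x := by
  rw [← spectrum_toLin', ← Module.End.hasEigenvalue_iff_mem_spectrum] at hz
  obtain ⟨x, hx, hx0⟩ := hz.exists_hasEigenvector
  exact ⟨x, hx0, by simpa using Module.End.mem_eigenspace_iff.mp hx⟩

theorem mem_spectrum_of_mulVec_eq_smul [DecidableEq ι] {A : Matrix ι ι ℂ} {z : ℂ} {x : ι → ℂ}
    (hx0 : x ≠ 0) (hx : A *ᵥ x = z • x) : z ∈ spectrum ℂ A := by
  rw [← spectrum_toLin', ← Module.End.hasEigenvalue_iff_mem_spectrum]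
  exact Module.End.hasEigenvalue_of_hasEigenvector
    ⟨Module.End.mem_eigenspace_iff.mpr (by simpa using hx), hx0⟩

theorem sSup_norm_spectrum_eq_of_pos_eigenvector [DecidableEq ι] [Nonempty ι] {A : Matrix ι ι ℝ}
    (hA : ∀ i j, 0 ≤ A i j) {r : ℝ} (hr : 0 ≤ r) {v : ι → ℝ} (hv : ∀ i, 0 < v i)
    (hAv : A *ᵥ v = r • v) :
    sSup ((fun z : ℂ => ‖z‖) '' spectrum ℂ (A.map (fun a => (a : ℂ)))) = r := by
  obtain ⟨i₀⟩ := ‹Nonempty ι›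
  refine IsGreatest.csSup_eq
    ⟨⟨r, mem_spectrum_of_mulVec_eq_smul (x := fun i => (v i : ℂ)) ?_ ?_, ?_⟩, ?_⟩
  · intro h
    simpa using (hv i₀).ne' (by simpa using congrFun h i₀)
  · ext i
    refine (Complex.ofRealHom.map_mulVec A v i).symm.trans ?_
    simp [hAv]
  · simp [abs_of_nonneg hr]
  · rintro _ ⟨z, hz, rfl⟩
    obtain ⟨x, hx0, hx⟩ := exists_mulVec_eq_smul_of_mem_spectrum hz
    refine le_eigenvalue_of_smul_le_mulVec hA hv hAv (w := fun j => ‖x j‖)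
      (fun j => norm_nonneg _) ?_ fun i => ?_
    · simpa [funext_iff] using hx0
    · simpa [hx] using norm_map_ofReal_mulVec_le hA x i

theorem le_sum_of_smul_le_mulVec {A : Matrix ι ι ℝ} (hA : ∀ i j, 0 ≤ A i j) {x : ι → ℝ}
    (hx : x ∈ stdSimplex ℝ ι) {t : ℝ} (htx : t • x ≤ A *ᵥ x) : t ≤ ∑ i, ∑ j, A i j :=
  calc t = ∑ i, (t • x) i := by simp [← mul_sum, hx.2]
    _ ≤ ∑ i, (A *ᵥ x) i := sum_le_sum fun i _ => htx i
    _ ≤ ∑ i, (A *ᵥ 1) i :=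
      sum_le_sum fun i _ =>
        mulVec_mono_of_nonneg hA (fun j => (mem_Icc_of_mem_stdSimplex hx j).2) i
    _ = ∑ i, ∑ j, A i j := by simp [mulVec, dotProduct]

theorem exists_max_collatzWielandt [Nonempty ι] {A : Matrix ι ι ℝ} (hA : ∀ i j, 0 ≤ A i j) :
    ∃ x ∈ stdSimplex ℝ ι, ∃ r : ℝ, 0 ≤ r ∧ r • x ≤ A *ᵥ x ∧
      ∀ y ∈ stdSimplex ℝ ι, ∀ t, 0 ≤ t → t • y ≤ A *ᵥ y → t ≤ r := by
  set C : Set ((ι → ℝ) × ℝ) := {p | p.1 ∈ stdSimplex ℝ ι ∧ 0 ≤ p.2 ∧ p.2 • p.1 ≤ A *ᵥ p.1}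
  have hclosed : IsClosed C :=
    ((isClosed_stdSimplex ℝ ι).preimage continuous_fst).inter
      ((isClosed_le continuous_const continuous_snd).inter
        (isClosed_le (f := fun p : (ι → ℝ) × ℝ => p.2 • p.1) (by fun_prop)
          (continuous_const.matrix_mulVec continuous_fst)))
  have hC : IsCompact C :=
    ((isCompact_stdSimplex ℝ ι).prod (isCompact_Icc (a := 0) (b := ∑ i, ∑ j, A i j)))
      |>.of_isClosed_subset hclosed fun p hp =>
        ⟨hp.1, hp.2.1, le_sum_of_smul_le_mulVec hA hp.1 hp.2.2⟩
  classical
  obtain ⟨i₀⟩ := ‹Nonempty ι›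
  have hC₀ : (Pi.single i₀ 1, 0) ∈ C := ⟨single_mem_stdSimplex ℝ i₀, le_rfl, by
    rw [zero_smul, ← mulVec_zero A]
    exact mulVec_mono_of_nonneg hA (single_mem_stdSimplex ℝ i₀).1⟩
  obtain ⟨⟨x, r⟩, ⟨hx, hr, hrx⟩, hmax⟩ := hC.exists_isMaxOn ⟨_, hC₀⟩ continuous_snd.continuousOn
  exact ⟨x, hx, r, hr, hrx, fun y hy t ht hty => hmax (a := (y, t)) ⟨hy, ht, hty⟩⟩

theorem exists_gt_collatzWielandt {A : Matrix ι ι ℝ} (hA : ∀ i j, 0 < A i j) {x : ι → ℝ}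
    (hx : x ∈ stdSimplex ℝ ι) {r : ℝ} (hrx : r • x ≤ A *ᵥ x) (hne : A *ᵥ x ≠ r • x) :
    ∃ y ∈ stdSimplex ℝ ι, ∃ t, r < t ∧ t • y ≤ A *ᵥ y := by
  set y := A *ᵥ x
  obtain ⟨i₀, -⟩ := Function.ne_iff.mp (ne_zero_of_mem_stdSimplex hx)
  have hy : ∀ i, 0 < y i := mulVec_pos_of_pos hA hx.1 (ne_zero_of_mem_stdSimplex hx)
  have hstrict : ∀ i, r * y i < (A *ᵥ y) i := fun i => by
    simpa [y, mulVec_sub, mulVec_smul] using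
      mulVec_pos_of_pos hA (sub_nonneg.mpr hrx) (sub_ne_zero.mpr hne) i
  obtain ⟨t, hrt, ht⟩ := (eventually_all.mpr fun i =>
    (continuousAt_id.mul continuousAt_const).eventually_lt continuousAt_const (hstrict i)).exists_gt
  have hsum : 0 < ∑ i, y i := sum_pos (fun i _ => hy i) ⟨i₀, mem_univ _⟩
  have hc : 0 < (∑ i, y i)⁻¹ := inv_pos.mpr hsum
  refine ⟨(∑ i, y i)⁻¹ • y, ⟨fun i => (mul_pos hc (hy i)).le, ?_⟩, t, hrt, fun i => ?_⟩
  · simp [← mul_sum, hsum.ne']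
  · simp only [mulVec_smul, Pi.smul_apply, smul_eq_mul, mul_left_comm t]
    exact mul_le_mul_of_nonneg_left (ht i).le hc.le

theorem exists_pos_eigenvector_of_pos [Nonempty ι] {A : Matrix ι ι ℝ} (hA : ∀ i j, 0 < A i j) :
    ∃ r : ℝ, 0 < r ∧ ∃ v : ι → ℝ, (∀ i, 0 < v i) ∧ A *ᵥ v = r • v := by
  classical
  obtain ⟨x, hx, r, hr0, hrx, hmax⟩ := exists_max_collatzWielandt fun i j => (hA i j).le
  have hr : 0 < r := by
    obtain ⟨i⟩ := ‹Nonempty ι›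
    refine (hA i i).trans_le (hmax _ (single_mem_stdSimplex ℝ i) _ (hA i i).le fun k => ?_)
    rcases eq_or_ne k i with rfl | hk
    · simp
    · simp [hk, (hA k i).le]
  have heig : A *ᵥ x = r • x := by
    by_contra hne
    obtain ⟨y, hy, t, hrt, hty⟩ := exists_gt_collatzWielandt hA hx hrx hne
    exact (hmax y hy t (hr0.trans hrt.le) hty).not_gt hrt
  refine ⟨r, hr, x, fun i => ?_, heig⟩
  have hAx := mulVec_pos_of_pos hA hx.1 (ne_zero_of_mem_stdSimplex hx) i
  rw [heig] at hAx
  exact pos_of_mul_pos_right hAx hr.le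

theorem rank_vecMulVec_eq_one {m n K : Type*} [Fintype m] [Fintype n] [DecidableEq n]
    [Field K] {w : m → K} {u : n → K} (hw : w ≠ 0) (hu : u ≠ 0) : (vecMulVec w u).rank = 1 := by
  refine le_antisymm (rank_vecMulVec_le w u) (Nat.one_le_iff_ne_zero.mpr fun h => hw ?_)
  obtain ⟨j, hj⟩ := Function.ne_iff.mp hu
  rw [rank, Submodule.finrank_eq_zero] at h
  have hw_mem : w ∈ LinearMap.range (vecMulVec w u).mulVecLin :=
    ⟨Pi.single j (u j)⁻¹, by
      ext i
      simpa [mulVec, vecMulVec_apply] using mul_inv_cancel_right₀ hj (w i)⟩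
  simpa [h] using hw_mem

section DiagonalConj

variable [DecidableEq ι] {K : Type*} [Field K] {v : ι → K}

theorem diagonal_mul_diagonal_inv (hv : ∀ i, v i ≠ 0) : diagonal v * diagonal v⁻¹ = 1 := by
  rw [diagonal_mul_diagonal, ← diagonal_one]
  exact congrArg diagonal (funext fun i => mul_inv_cancel₀ (hv i))

theorem diagonal_inv_mul_diagonal (hv : ∀ i, v i ≠ 0) : diagonal v⁻¹ * diagonal v = 1 := by
  rw [diagonal_mul_diagonal, ← diagonal_one]
  exact congrArg diagonal (funext fun i => inv_mul_cancel₀ (hv i))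

theorem diagonal_inv_mul_pow_mul_diagonal (hv : ∀ i, v i ≠ 0) (B : Matrix ι ι K) (n : ℕ) :
    (diagonal v⁻¹ * B * diagonal v) ^ n = diagonal v⁻¹ * B ^ n * diagonal v :=
  Units.conj_pow' ⟨diagonal v, diagonal v⁻¹, diagonal_mul_diagonal_inv hv,
    diagonal_inv_mul_diagonal hv⟩ B n

end DiagonalConj

section RowStochastic

variable [DecidableEq ι] {P : Matrix ι ι ℝ}

theorem mulVec_apply_le_of_mem_rowStochastic (hP : P ∈ rowStochastic ℝ ι) {δ : ℝ}
    (hδ : ∀ i j, δ ≤ P i j) {x : ι → ℝ} {M : ℝ} (hM : ∀ k, x k ≤ M) (i j : ι) :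
    (P *ᵥ x) i ≤ M - δ * (M - x j) := by
  have hsub : (P *ᵥ (M • 1 - x)) i = M - (P *ᵥ x) i := by
    simp [mulVec_sub, mulVec_smul, one_vecMul_of_mem_rowStochastic hP]
  have hterm : P i j * (M - x j) ≤ (P *ᵥ (M • 1 - x)) i :=
    single_le_sum (f := fun k => P i k * (M • 1 - x) k)
      (fun k _ => mul_nonneg (hP.1 i k) (by simpa using hM k)) (mem_univ j) |>.trans_eq' (by simp)
  linarith [mul_le_mul_of_nonneg_right (hδ i j) (sub_nonneg.mpr (hM j))]

theorem le_mulVec_apply_of_mem_rowStochastic (hP : P ∈ rowStochastic ℝ ι) {δ : ℝ}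
    (hδ : ∀ i j, δ ≤ P i j) {x : ι → ℝ} {m : ℝ} (hm : ∀ k, m ≤ x k) (i j : ι) :
    m + δ * (x j - m) ≤ (P *ᵥ x) i := by
  have := mulVec_apply_le_of_mem_rowStochastic hP hδ (x := -x) (M := -m)
    (fun k => neg_le_neg (hm k)) i j
  simp only [mulVec_neg, Pi.neg_apply] at this
  linarith

variable [Nonempty ι]

theorem iSup_sub_iInf_mulVec_le (hP : P ∈ rowStochastic ℝ ι) {δ : ℝ} (hδ : ∀ i j, δ ≤ P i j)
    (x : ι → ℝ) :
    (⨆ i, (P *ᵥ x) i) - ⨅ i, (P *ᵥ x) i ≤ (1 - δ) * ((⨆ i, x i) - ⨅ i, x i) := by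
  obtain ⟨j⟩ := ‹Nonempty ι›
  -- both bounds are taken at the same column `j`, so the terms `δ * x j` cancel
  have hsup : (⨆ i, (P *ᵥ x) i) ≤ (⨆ i, x i) - δ * ((⨆ i, x i) - x j) :=
    ciSup_le fun i => mulVec_apply_le_of_mem_rowStochastic hP hδ
      (le_ciSup (Finite.bddAbove_range x)) i j
  have hinf : (⨅ i, x i) + δ * (x j - ⨅ i, x i) ≤ ⨅ i, (P *ᵥ x) i :=
    le_ciInf fun i => le_mulVec_apply_of_mem_rowStochastic hP hδ
      (ciInf_le (Finite.bddBelow_range x)) i j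
  linarith

theorem iSup_sub_iInf_pow_mulVec_le (hP : P ∈ rowStochastic ℝ ι) {δ : ℝ} (hδ : ∀ i j, δ ≤ P i j)
    (x : ι → ℝ) (n : ℕ) :
    (⨆ i, (P ^ n *ᵥ x) i) - ⨅ i, (P ^ n *ᵥ x) i ≤ (1 - δ) ^ n * ((⨆ i, x i) - ⨅ i, x i) := by
  obtain ⟨j⟩ := ‹Nonempty ι›
  have hδ1 : 0 ≤ 1 - δ := sub_nonneg.mpr ((hδ j j).trans (le_one_of_mem_rowStochastic hP))
  induction n with
  | zero => simp
  | succ n ih =>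
    rw [pow_succ', ← mulVec_mulVec, pow_succ', mul_assoc]
    exact (iSup_sub_iInf_mulVec_le hP hδ _).trans (mul_le_mul_of_nonneg_left ih hδ1)

theorem exists_tendsto_pow_mulVec (hP : P ∈ rowStochastic ℝ ι) {δ : ℝ} (hδ0 : 0 < δ)
    (hδ : ∀ i j, δ ≤ P i j) (x : ι → ℝ) :
    ∃ c, (∀ n, ⨅ i, (P ^ n *ᵥ x) i ≤ c) ∧
      Tendsto (fun n => P ^ n *ᵥ x) atTop (𝓝 fun _ => c) := by
  obtain ⟨i₀⟩ := ‹Nonempty ι›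
  set m : ℕ → ℝ := fun n => ⨅ i, (P ^ n *ᵥ x) i
  set M : ℕ → ℝ := fun n => ⨆ i, (P ^ n *ᵥ x) i
  have hstep : ∀ n, P ^ (n + 1) *ᵥ x = P *ᵥ (P ^ n *ᵥ x) := fun n => by
    rw [pow_succ', mulVec_mulVec]
  have hm : Monotone m := monotone_nat_of_le_succ fun n => le_ciInf fun i => by
    simpa [hstep] using le_mulVec_apply_of_mem_rowStochastic hP hP.1
      (ciInf_le (Finite.bddBelow_range (P ^ n *ᵥ x))) i i
  have hM : Antitone M := antitone_nat_of_succ_le fun n => ciSup_le fun i => by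
    simpa [hstep] using mulVec_apply_le_of_mem_rowStochastic hP hP.1
      (le_ciSup (Finite.bddAbove_range (P ^ n *ᵥ x))) i i
  have hmM : ∀ n, m n ≤ M n := fun n =>
    (ciInf_le (Finite.bddBelow_range _) i₀).trans
      (le_ciSup (Finite.bddAbove_range _) _)
  have hbdd : BddAbove (Set.range m) := ⟨M 0, by
    rintro _ ⟨n, rfl⟩
    exact (hmM n).trans (hM n.zero_le)⟩
  have hlim_m : Tendsto m atTop (𝓝 (⨆ n, m n)) := tendsto_atTop_ciSup hm hbdd
  have hgap : Tendsto (fun n => M n - m n) atTop (𝓝 0) := by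
    refine squeeze_zero (fun n => sub_nonneg.mpr (hmM n))
      (iSup_sub_iInf_pow_mulVec_le hP hδ x) ?_
    have hδ1 : δ ≤ 1 := (hδ i₀ i₀).trans (le_one_of_mem_rowStochastic hP)
    simpa using
      (tendsto_pow_atTop_nhds_zero_of_lt_one (r := 1 - δ) (by linarith) (by linarith)).mul_const _
  have hlim_M : Tendsto M atTop (𝓝 (⨆ n, m n)) := by
    simpa using hlim_m.add hgap
  refine ⟨⨆ n, m n, le_ciSup hbdd, tendsto_pi_nhds.mpr fun i => ?_⟩
  exact tendsto_of_tendsto_of_tendsto_of_le_of_le hlim_m hlim_M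
    (fun n => ciInf_le (Finite.bddBelow_range _) i) (fun n => le_ciSup (Finite.bddAbove_range _) i)

theorem exists_tendsto_pow_of_pos (hP : P ∈ rowStochastic ℝ ι) (hpos : ∀ i j, 0 < P i j) :
    ∃ π : ι → ℝ, (∀ j, 0 < π j) ∧ Tendsto (fun n => P ^ n) atTop (𝓝 (vecMulVec 1 π)) := by
  obtain ⟨p, hp⟩ := Finite.exists_min fun p : ι × ι => P p.1 p.2
  choose π hπ hlim using fun j =>
    exists_tendsto_pow_mulVec hP (hpos p.1 p.2) (fun i k => hp (i, k)) (Pi.single j 1)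
  refine ⟨π, fun j => ?_, tendsto_pi_nhds.mpr fun i => tendsto_pi_nhds.mpr fun j => ?_⟩
  · obtain ⟨i, hi⟩ := exists_eq_ciInf_of_finite (f := fun i => (P ^ 1 *ᵥ Pi.single j 1) i)
    exact (by simpa using hpos i j : 0 < (P ^ 1 *ᵥ Pi.single j 1) i).trans_le (hi ▸ hπ j 1)
  · simpa using tendsto_pi_nhds.mp (hlim j) i

end RowStochastic

theorem exists_tendsto_inv_pow_smul_pow_of_pos [DecidableEq ι] [Nonempty ι] {A : Matrix ι ι ℝ}
    (hA : ∀ i j, 0 < A i j) {r : ℝ} (hr : 0 < r) {v : ι → ℝ} (hv : ∀ i, 0 < v i)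
    (hAv : A *ᵥ v = r • v) :
    ∃ L : Matrix ι ι ℝ, (∀ i j, 0 < L i j) ∧ L.rank = 1 ∧
      Tendsto (fun n => (r ^ n)⁻¹ • A ^ n) atTop (𝓝 L) := by
  set P : Matrix ι ι ℝ := r⁻¹ • (diagonal v⁻¹ * A * diagonal v)
  have hPpos : ∀ i j, 0 < P i j := fun i j => by
    simp only [P, smul_apply, diagonal_mul, mul_diagonal, smul_eq_mul, Pi.inv_apply]
    have := hv i; have := hv j; have := hA i j
    positivity
  have hP : P ∈ rowStochastic ℝ ι := by
    refine ⟨fun i j => (hPpos i j).le, ?_⟩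
    have hDv : diagonal v⁻¹ *ᵥ v = 1 := funext fun i => by simp [mulVec_diagonal, (hv i).ne']
    have hDone : diagonal v *ᵥ 1 = v := funext fun i => by simp [mulVec_diagonal]
    rw [smul_mulVec, ← mulVec_mulVec, ← mulVec_mulVec, hDone, hAv, mulVec_smul, hDv, smul_smul,
      inv_mul_cancel₀ hr.ne', one_smul]
  have hconj : ∀ n, (r ^ n)⁻¹ • A ^ n = diagonal v * P ^ n * diagonal v⁻¹ := fun n => by
    have hv0 : ∀ i, v i ≠ 0 := fun i => (hv i).ne'
    rw [smul_pow, diagonal_inv_mul_pow_mul_diagonal hv0, inv_pow, Matrix.mul_smul,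
      Matrix.smul_mul]
    simp only [← mul_assoc, diagonal_mul_diagonal_inv hv0, one_mul]
    rw [mul_assoc, diagonal_mul_diagonal_inv hv0, mul_one]
  obtain ⟨π, hπ, hlim⟩ := exists_tendsto_pow_of_pos hP hPpos
  have hL : diagonal v * vecMulVec 1 π * diagonal v⁻¹ = vecMulVec v fun j => π j / v j := by
    rw [mul_vecMulVec, vecMulVec_mul]
    congr 1
    · ext i; simp [mulVec_diagonal]
    · ext j; simp [vecMul_diagonal, div_eq_mul_inv]
  have hLpos : ∀ i j, 0 < vecMulVec v (fun j => π j / v j) i j := fun i j =>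
    mul_pos (hv i) (div_pos (hπ j) (hv j))
  obtain ⟨i⟩ := ‹Nonempty ι›
  refine ⟨_, hLpos, rank_vecMulVec_eq_one ?_ ?_, ?_⟩
  · exact fun h => (hv i).ne' (congrFun h i)
  · exact fun h => (div_pos (hπ i) (hv i)).ne' (congrFun h i)
  · simp only [hconj, ← hL]
    exact (tendsto_const_nhds.mul hlim).mul tendsto_const_nhds

end Matrix

/-- Perron's theorem: for a strictly positive square matrix `A` with spectral radius `ρ`,
the rescaled powers `ρ⁻ⁿ Aⁿ` converge entrywise to a rank-one strictly positive matrix. -/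
theorem stmt3 (s : ℕ) [NeZero s] (A : Matrix (Fin s) (Fin s) ℝ)
    (hA : ∀ i j, 0 < A i j)
    (ρ : ℝ)
    (hρ : ρ = sSup ((fun z : ℂ => ‖z‖) ''
      spectrum ℂ (A.map (fun x => (x : ℂ))))) :
    ∃ L : Matrix (Fin s) (Fin s) ℝ, (∀ i j, 0 < L i j) ∧ L.rank = 1 ∧
      Tendsto (fun n => (ρ ^ n)⁻¹ • A ^ n) atTop (nhds L) := by
  obtain ⟨r, hr, v, hv, hAv⟩ := exists_pos_eigenvector_of_pos hA
  have hρr : ρ = r :=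
    hρ.trans (sSup_norm_spectrum_eq_of_pos_eigenvector (fun i j => (hA i j).le) hr.le hv hAv)
  subst hρr
  exact exists_tendsto_inv_pow_smul_pow_of_pos hA hr hv hAv
end

section
/- Suppose M is irreducible and the closure of the cone {c·M(y_1)⋯M(y_n) : c > 0, n ≥ 1, y_i ∈ 𝒴} contains a rank-one matrix R = u v with v a probability row vector. Then v is topologically reachable for the α-chain: for every α ∈ Δ and every open neighborhood 𝒪 of v in Δ there exists k > 0 with P^k(α, 𝒪) > 0, where P^k(α, A) = Σ_{y ∈ 𝒴^k, α M(y)/(α M(y) e) ∈ A} α M(y) e. -/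
open Matrix Filter
open scoped Classical

/-- The product `M(w) = M(w₁) ⋯ M(wₖ)` of a word. -/
def wordProd {s : ℕ} {Y : Type*} (M : Y → Matrix (Fin s) (Fin s) ℝ)
    {n : ℕ} (w : Fin n → Y) : Matrix (Fin s) (Fin s) ℝ :=
  (List.ofFn (fun i => M (w i))).prod

/-- The k-step transition kernel of the α-chain:
`Pᵏ(α, A) = Σ_{y ∈ 𝒴ᵏ, α M(y)/(α M(y) e) ∈ A} α M(y) e`. -/
noncomputable def Pker {s : ℕ} {Y : Type*} [Fintype Y]
    (M : Y → Matrix (Fin s) (Fin s) ℝ) (k : ℕ)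
    (α : Fin s → ℝ) (A : Set (Fin s → ℝ)) : ℝ :=
  ∑ w : Fin k → Y,
    if ((∑ j, (α ᵥ* wordProd M w) j)⁻¹ • (α ᵥ* wordProd M w)) ∈ A
    then ∑ j, (α ᵥ* wordProd M w) j else 0

lemma listProd_nonneg {s : ℕ} :
    ∀ (l : List (Matrix (Fin s) (Fin s) ℝ)), (∀ A ∈ l, ∀ i j, 0 ≤ A i j) →
      ∀ i j, 0 ≤ l.prod i j := by
  intro l
  induction l with
  | nil =>
    intro _ i j
    simp only [List.prod_nil, Matrix.one_apply]
    split <;> norm_num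
  | cons A t ih =>
    intro h i j
    rw [List.prod_cons, Matrix.mul_apply]
    exact Finset.sum_nonneg fun k _ =>
      mul_nonneg (h A (by simp) i k) (ih (fun B hB => h B (by simp [hB])) k j)

lemma wordProd_eq {s : ℕ} {Y : Type*} (M : Y → Matrix (Fin s) (Fin s) ℝ)
    {n : ℕ} (w : Fin n → Y) : wordProd M w = ((List.ofFn w).map M).prod := by
  rw [List.map_ofFn]; rfl

lemma wordProd_cons {s : ℕ} {Y : Type*} (M : Y → Matrix (Fin s) (Fin s) ℝ)
    {n : ℕ} (y : Y) (w : Fin n → Y) :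
    wordProd M (Fin.cons y w) = M y * wordProd M w := by
  unfold wordProd
  rw [List.ofFn_succ, List.prod_cons]
  simp [Fin.cons_zero, Fin.cons_succ]

lemma pow_eq_sum_words {s : ℕ} {Y : Type*} [Fintype Y]
    (M : Y → Matrix (Fin s) (Fin s) ℝ) :
    ∀ k : ℕ, (∑ y, M y) ^ k = ∑ w : Fin k → Y, wordProd M w := by
  intro k
  induction k with
  | zero => simp [wordProd]
  | succ n ih =>
    rw [pow_succ', ih, Finset.sum_mul_sum]
    rw [← Equiv.sum_comp (Fin.consEquiv fun _ : Fin (n+1) => Y)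
      (fun w => wordProd M w), Fintype.sum_prod_type]
    exact Finset.sum_congr rfl fun y _ => Finset.sum_congr rfl fun w _ =>
      (wordProd_cons M y w).symm

lemma vecMul_apply' {s : ℕ} (x : Fin s → ℝ) (A : Matrix (Fin s) (Fin s) ℝ) (j : Fin s) :
    (x ᵥ* A) j = ∑ i, x i * A i j := rfl

/-- If `M` is irreducible and the closure of the cone of rescaled words contains a rank-one
matrix `R = u v` with `v` a probability vector, then `v` is topologically reachable: every
open neighborhood of `v` is hit with positive probability from every `α ∈ Δ`. -/
theorem stmt9 (s : ℕ) (Y : Type*) [Fintype Y]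
    (M : Y → Matrix (Fin s) (Fin s) ℝ)
    (hpos : ∀ y i j, 0 ≤ M y i j)
    (Mtot : Matrix (Fin s) (Fin s) ℝ) (hMtot : Mtot = ∑ y, M y)
    (hstoch : ∀ i, ∑ j, Mtot i j = 1)
    (hirr : ∀ i j, ∃ k, 0 < k ∧ 0 < (Mtot ^ k) i j)
    (u : Fin s → ℝ) (hu : ∀ i, 0 ≤ u i) (hune : u ≠ 0)
    (v : Fin s → ℝ) (hv : v ∈ stdSimplex ℝ (Fin s))
    (hmem : (Matrix.of fun i j => u i * v j) ∈
      closure {A : Matrix (Fin s) (Fin s) ℝ |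
        ∃ (c : ℝ) (z : List Y), 0 < c ∧ z ≠ [] ∧ A = c • (z.map M).prod}) :
    ∀ α ∈ stdSimplex ℝ (Fin s), ∀ O : Set (Fin s → ℝ), IsOpen O → v ∈ O →
      ∃ k : ℕ, 0 < k ∧ 0 < Pker M k α O := by
  intro α hα O hO hvO
  obtain ⟨hα0, hα1⟩ := hα
  -- general nonnegativity of word products
  have hwpnn : ∀ {n : ℕ} (w : Fin n → Y) (i j : Fin s), 0 ≤ wordProd M w i j := by
    intro n w i j
    rw [wordProd_eq]
    refine listProd_nonneg _ ?_ i j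
    intro A hA i j
    simp only [List.mem_map] at hA
    obtain ⟨y, _, rfl⟩ := hA
    exact hpos y i j
  -- find coordinates with positive mass
  have hex1 : ∃ i1, 0 < α i1 := by
    by_contra h
    push_neg at h
    have : ∑ i, α i ≤ 0 := Finset.sum_nonpos fun i _ => h i
    rw [hα1] at this; linarith
  obtain ⟨i1, hi1⟩ := hex1
  obtain ⟨i0, hi0'⟩ := Function.ne_iff.mp hune
  have hi0 : 0 < u i0 := lt_of_le_of_ne (hu i0) (Ne.symm hi0')
  obtain ⟨k0, hk0pos, hk0⟩ := hirr i1 i0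
  rw [hMtot, pow_eq_sum_words, Matrix.sum_apply] at hk0
  have hexw0 : ∃ w0 : Fin k0 → Y, 0 < wordProd M w0 i1 i0 := by
    by_contra h
    push_neg at h
    have : ∑ w0 : Fin k0 → Y, wordProd M w0 i1 i0 ≤ 0 :=
      Finset.sum_nonpos fun w _ => h w
    linarith
  obtain ⟨w0, hw0⟩ := hexw0
  set β : Fin s → ℝ := α ᵥ* wordProd M w0 with hβdef
  have hβnn : ∀ j, 0 ≤ β j := by
    intro j
    rw [hβdef, vecMul_apply']
    exact Finset.sum_nonneg fun i _ => mul_nonneg (hα0 i) (hwpnn w0 i j)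
  have hβi0 : 0 < β i0 := by
    have h1 : α i1 * wordProd M w0 i1 i0 ≤ β i0 := by
      rw [hβdef, vecMul_apply']
      exact Finset.single_le_sum
        (fun i _ => mul_nonneg (hα0 i) (hwpnn w0 i i0)) (Finset.mem_univ i1)
    exact lt_of_lt_of_le (mul_pos hi1 hw0) h1
  set d : ℝ := ∑ i, β i * u i with hd
  have hdpos : 0 < d :=
    lt_of_lt_of_le (mul_pos hβi0 hi0)
      (Finset.single_le_sum (fun i _ => mul_nonneg (hβnn i) (hu i)) (Finset.mem_univ i0))
  -- continuity setup
  set f : Matrix (Fin s) (Fin s) ℝ → ℝ := fun A => ∑ j, (β ᵥ* A) j with hfdef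
  have hfc : Continuous f := by
    apply continuous_finset_sum
    intro j _
    simp only [vecMul_apply']
    apply continuous_finset_sum
    intro i _
    exact continuous_const.mul ((continuous_apply j).comp (continuous_apply i))
  have hhc : Continuous fun A : Matrix (Fin s) (Fin s) ℝ => β ᵥ* A := by
    apply continuous_pi
    intro j
    simp only [vecMul_apply']
    apply continuous_finset_sum
    intro i _
    exact continuous_const.mul ((continuous_apply j).comp (continuous_apply i))
  set g : Matrix (Fin s) (Fin s) ℝ → (Fin s → ℝ) := fun A => (f A)⁻¹ • (β ᵥ* A) with hgdef
  set U : Set (Matrix (Fin s) (Fin s) ℝ) := {A | 0 < f A ∧ g A ∈ O} with hUdef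
  have hUopen : IsOpen U := by
    rw [isOpen_iff_mem_nhds]
    rintro A ⟨hA1, hA2⟩
    have hgc : ContinuousAt g A :=
      ContinuousAt.smul (hfc.continuousAt.inv₀ (ne_of_gt hA1)) hhc.continuousAt
    have h1 : f ⁻¹' Set.Ioi 0 ∈ nhds A :=
      hfc.continuousAt.preimage_mem_nhds (Ioi_mem_nhds hA1)
    have h2 : g ⁻¹' O ∈ nhds A := hgc.preimage_mem_nhds (hO.mem_nhds hA2)
    filter_upwards [h1, h2] with B hB1 hB2
    exact ⟨hB1, hB2⟩
  -- R ∈ U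
  have hβR : β ᵥ* (Matrix.of fun i j => u i * v j) = d • v := by
    funext j
    rw [vecMul_apply']
    simp only [Matrix.of_apply, Pi.smul_apply, smul_eq_mul, hd]
    rw [Finset.sum_mul]
    exact Finset.sum_congr rfl fun i _ => (mul_assoc _ _ _).symm
  have hfR : f (Matrix.of fun i j => u i * v j) = d := by
    rw [hfdef]
    simp only [hβR, Pi.smul_apply, smul_eq_mul]
    rw [← Finset.mul_sum, hv.2, mul_one]
  have hRU : (Matrix.of fun i j => u i * v j) ∈ U := by
    constructor
    · rw [hfR]; exact hdpos
    · show (f _)⁻¹ • (β ᵥ* _) ∈ O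
      rw [hfR, hβR, smul_smul, inv_mul_cancel₀ (ne_of_gt hdpos), one_smul]
      exact hvO
  obtain ⟨A, hAU, c, z, hc, hz, hAe⟩ := mem_closure_iff.mp hmem U hUopen hRU
  subst hAe
  set P : Matrix (Fin s) (Fin s) ℝ := (z.map M).prod with hP
  have hvecsmul : β ᵥ* (c • P) = c • (β ᵥ* P) := by
    funext j
    simp only [vecMul_apply', Matrix.smul_apply, Pi.smul_apply, smul_eq_mul,
      Finset.mul_sum]
    exact Finset.sum_congr rfl fun i _ => by ring
  have hfA : f (c • P) = c * f P := by
    rw [hfdef]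
    simp only [hvecsmul, Pi.smul_apply, smul_eq_mul]
    rw [← Finset.mul_sum]
  obtain ⟨hApos, hAO⟩ := hAU
  have ht' : 0 < f P := by
    rw [hfA] at hApos
    by_contra h
    push_neg at h
    nlinarith
  have hgA : g (c • P) = (f P)⁻¹ • (β ᵥ* P) := by
    rw [hgdef]
    show (f (c • P))⁻¹ • (β ᵥ* (c • P)) = _
    rw [hfA, hvecsmul, smul_smul]
    congr 1
    rw [mul_comm c (f P), mul_inv, mul_assoc, inv_mul_cancel₀ (ne_of_gt hc), mul_one]
  rw [hgA] at hAO
  -- the witness word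
  set l : List Y := List.ofFn w0 ++ z with hl
  have hword : wordProd M (fun i => l.get i) = wordProd M w0 * P := by
    rw [wordProd_eq]
    have h1 : List.ofFn (fun i => l.get i) = l := List.ofFn_get l
    rw [h1, hl, List.map_append, List.prod_append, ← wordProd_eq, hP]
  have hαw : α ᵥ* wordProd M (fun i => l.get i) = β ᵥ* P := by
    rw [hword, ← Matrix.vecMul_vecMul, ← hβdef]
  refine ⟨l.length, ?_, ?_⟩
  · have : 0 < z.length := List.length_pos_iff.mpr hz
    simp only [hl, List.length_append]
    omega
  · unfold Pker
    apply Finset.sum_pos'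
    · intro w _
      split
      · refine Finset.sum_nonneg fun j _ => ?_
        rw [vecMul_apply']
        exact Finset.sum_nonneg fun i _ => mul_nonneg (hα0 i) (hwpnn w i j)
      · exact le_refl 0
    · refine ⟨fun i => l.get i, Finset.mem_univ _, ?_⟩
      rw [if_pos]
      · rw [hαw]
        exact ht'
      · rw [hαw]
        exact hAO
end

section
/- Under the hypotheses of the rank-one condition with M irreducible and aperiodic, with S_n = M(z) M(y_n), t = 2√δ_n · π S_n e, and m = |z| + |y_n| chosen as in the construction, the k+m-step transition probabilities satisfy P^{k+m}(α, 𝒪) ≥ α M^k S_n e − t for all α ∈ Δ and all k ≥ 0. -/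
/-!
Split the words of length `k + m` according to their first `k` letters and keep only those whose
last `m` letters spell `z yₙ`. A prefix `u` carries the row vector `b = α M(u) ≥ 0`, and after
reading `z yₙ` it becomes `b S = p ((b w) v + δ b T)` with `p = π S e`. If `b w > √δ ‖b‖₁` this
is a positive multiple of `v + √δ β` with `‖β‖₁ ≤ 1`, hence its direction lies in `𝒪`; otherwise
its total mass is at most `2 √δ p ‖b‖₁`. Either way the word contributes at least
`b S e − 2 √δ p ‖b‖₁`, and summing over `u` (where `∑ᵤ ‖α M(u)‖₁ = 1`) gives the bound.
-/

open Matrix Filter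
open scoped Classical

section massIn

variable {ι : Type*} [Fintype ι]

/-- `Pker M k α A` is, by unfolding, `∑ u : Fin k → Y, massIn A (α ᵥ* wordProd M u)`. -/
noncomputable def massIn (A : Set (ι → ℝ)) (x : ι → ℝ) : ℝ :=
  if (∑ j, x j)⁻¹ • x ∈ A then ∑ j, x j else 0

lemma massIn_nonneg (A : Set (ι → ℝ)) {x : ι → ℝ} (hx : 0 ≤ x) : 0 ≤ massIn A x := by
  unfold massIn
  split_ifs
  · exact Finset.sum_nonneg fun j _ => hx j
  · rfl

lemma massIn_smul (A : Set (ι → ℝ)) (x : ι → ℝ) {p : ℝ} (hp : p ≠ 0) :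
    massIn A (p • x) = p * massIn A x := by
  have hsum : ∑ j, (p • x) j = p * ∑ j, x j := by
    simp only [Pi.smul_apply, smul_eq_mul, Finset.mul_sum]
  have hnormalize : (∑ j, (p • x) j)⁻¹ • (p • x) = (∑ j, x j)⁻¹ • x := by
    rw [hsum, smul_smul, _root_.mul_inv_rev, inv_mul_cancel_right₀ hp]
  unfold massIn
  rw [hnormalize, hsum]
  split_ifs <;> simp

lemma sum_sub_le_massIn_add_smul {A : Set (ι → ℝ)} {v γ : ι → ℝ} {a δ r : ℝ}
    (hδ0 : 0 ≤ δ) (hδ1 : δ ≤ 1) (hv : ∑ j, v j = 1) (hγ : ∑ i, |γ i| ≤ r)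
    (hA : ∀ β : ι → ℝ, ∑ i, |β i| ≤ 1 → (1 + √δ * ∑ j, β j)⁻¹ • (v + √δ • β) ∈ A) :
    ∑ j, (a • v + δ • γ) j - 2 * √δ * r ≤ massIn A (a • v + δ • γ) := by
  have hsqrt : √δ * √δ = δ := Real.mul_self_sqrt hδ0
  have hr : 0 ≤ r := (Finset.sum_nonneg fun i _ => abs_nonneg (γ i)).trans hγ
  have hγr : |∑ j, γ j| ≤ r := (Finset.abs_sum_le_sum_abs _ _).trans hγ
  have hsum : ∑ j, (a • v + δ • γ) j = a + δ * ∑ j, γ j := by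
    simp only [Pi.add_apply, Pi.smul_apply, smul_eq_mul, Finset.sum_add_distrib,
      ← Finset.mul_sum, hv, mul_one]
  by_cases hlarge : √δ * r < a
  · have ha : 0 < a := lt_of_le_of_lt (by positivity) hlarge
    set β : ι → ℝ := (√δ / a) • γ
    have hβ : ∑ i, |β i| ≤ 1 := by
      simp only [β, Pi.smul_apply, smul_eq_mul, abs_mul,
        abs_of_nonneg (div_nonneg (Real.sqrt_nonneg δ) ha.le), ← Finset.mul_sum]
      rw [div_mul_eq_mul_div, div_le_one ha]
      exact (mul_le_mul_of_nonneg_left hγ (Real.sqrt_nonneg δ)).trans hlarge.le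
    have hβsum : ∑ j, β j = √δ / a * ∑ j, γ j := by
      simp only [β, Pi.smul_apply, smul_eq_mul, ← Finset.mul_sum]
    have hcoef : a * (√δ * (√δ / a)) = δ := by
      rw [← mul_div_assoc, hsqrt, mul_div_cancel₀ _ ha.ne']
    have hx : a • v + δ • γ = a • (v + √δ • β) := by
      simp only [β, smul_add, smul_smul, hcoef]
    have hxsum : ∑ j, (a • v + δ • γ) j = a * (1 + √δ * ∑ j, β j) := by
      rw [hsum, hβsum]
      linear_combination (-∑ j, γ j) * hcoef
    have hmem : (∑ j, (a • v + δ • γ) j)⁻¹ • (a • v + δ • γ) ∈ A := by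
      rw [hxsum, hx, smul_smul, _root_.mul_inv_rev, inv_mul_cancel_right₀ ha.ne']
      exact hA β hβ
    rw [massIn, if_pos hmem]
    linarith [mul_nonneg (Real.sqrt_nonneg δ) hr]
  · have hδ_le_sqrt : δ ≤ √δ := Real.le_sqrt_of_sq_le (by nlinarith)
    have hsmall : ∑ j, (a • v + δ • γ) j ≤ 2 * √δ * r := by
      rw [hsum]
      nlinarith [abs_le.mp hγr, mul_le_mul_of_nonneg_right hδ_le_sqrt hr]
    unfold massIn
    split_ifs <;> linarith [mul_nonneg (Real.sqrt_nonneg δ) hr]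

lemma sum_vecMul_sub_le_massIn {A : Set (ι → ℝ)} {S T : Matrix ι ι ℝ} {w v : ι → ℝ}
    {p δ : ℝ} (hp : 0 < p) (hδ0 : 0 ≤ δ) (hδ1 : δ ≤ 1) (hv : ∑ j, v j = 1)
    (hT : ∀ β : ι → ℝ, ∑ j, |(β ᵥ* T) j| ≤ ∑ i, |β i|)
    (hS : p⁻¹ • S = vecMulVec w v + δ • T)
    (hA : ∀ β : ι → ℝ, ∑ i, |β i| ≤ 1 → (1 + √δ * ∑ j, β j)⁻¹ • (v + √δ • β) ∈ A)
    (b : ι → ℝ) :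
    ∑ j, (b ᵥ* S) j - 2 * √δ * p * ∑ i, |b i| ≤ massIn A (b ᵥ* S) := by
  have hbS : b ᵥ* S = p • ((b ⬝ᵥ w) • v + δ • (b ᵥ* T)) := by
    rw [← vecMul_vecMulVec, ← vecMul_smul, ← vecMul_add, ← hS, vecMul_smul, smul_smul,
      mul_inv_cancel₀ hp.ne', one_smul]
  have hmass := sum_sub_le_massIn_add_smul (a := b ⬝ᵥ w) hδ0 hδ1 hv (hT b) hA
  rw [hbS, massIn_smul _ _ hp.ne']
  simp only [Pi.smul_apply, smul_eq_mul, ← Finset.mul_sum] at hmass ⊢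
  nlinarith

end massIn

section words

variable {s : ℕ} {Y : Type*} (M : Y → Matrix (Fin s) (Fin s) ℝ)

lemma wordProd_nonneg (hM : ∀ y i j, 0 ≤ M y i j) {n : ℕ} (u : Fin n → Y) (i j : Fin s) :
    0 ≤ wordProd M u i j := by
  induction n generalizing i j with
  | zero =>
    rw [wordProd, List.ofFn_zero, List.prod_nil, one_apply]
    split_ifs <;> norm_num
  | succ n ih =>
    rw [wordProd, List.ofFn_succ, List.prod_cons, mul_apply]
    exact Finset.sum_nonneg fun l _ => mul_nonneg (hM _ i l) (ih (Fin.tail u) l j)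

lemma wordProd_append {k n : ℕ} (u : Fin k → Y) (g : Fin n → Y) :
    wordProd M (Fin.append u g) = wordProd M u * wordProd M g := by
  simp [wordProd, List.ofFn_add, Fin.append_right]

lemma wordProd_get (L : List Y) : wordProd M (fun i : Fin L.length => L[i]) = (L.map M).prod :=
  congrArg List.prod (List.ofFn_getElem_eq_map L M)

lemma vecMul_wordProd_nonneg (hM : ∀ y i j, 0 ≤ M y i j) {α : Fin s → ℝ} (hα : 0 ≤ α) {n : ℕ}
    (u : Fin n → Y) : 0 ≤ α ᵥ* wordProd M u := fun j =>
  show 0 ≤ ∑ i, α i * wordProd M u i j from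
    Finset.sum_nonneg fun i _ => mul_nonneg (hα i) (wordProd_nonneg M hM u i j)

lemma sum_wordProd [Fintype Y] (n : ℕ) : ∑ u : Fin n → Y, wordProd M u = (∑ y, M y) ^ n := by
  induction n with
  | zero => simp [wordProd]
  | succ n ih =>
    rw [← (Fin.consEquiv fun _ => Y).sum_comp, Fintype.sum_prod_type, pow_succ', ← ih,
      Finset.sum_mul_sum]
    simp [wordProd, List.ofFn_succ]

lemma sum_massIn_append_le_Pker [Fintype Y] (hM : ∀ y i j, 0 ≤ M y i j) (A : Set (Fin s → ℝ))
    {α : Fin s → ℝ} (hα : 0 ≤ α) {k n : ℕ} (g : Fin n → Y) :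
    ∑ u : Fin k → Y, massIn A (α ᵥ* wordProd M (Fin.append u g)) ≤ Pker M (k + n) α A := by
  have hinj : Function.Injective fun u : Fin k → Y => Fin.append u g := fun u u' h =>
    funext fun i => by simpa [Fin.append_left] using congrFun h (Fin.castAdd n i)
  calc ∑ u : Fin k → Y, massIn A (α ᵥ* wordProd M (Fin.append u g))
      = ∑ x ∈ Finset.univ.map ⟨_, hinj⟩, massIn A (α ᵥ* wordProd M x) :=
        by rw [Finset.sum_map]; rfl
    _ ≤ Pker M (k + n) α A := Finset.sum_le_univ_sum_of_nonneg fun x =>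
        massIn_nonneg A (vecMul_wordProd_nonneg M hM hα x)

lemma sum_vecMul_wordProd [Fintype Y] (x : Fin s → ℝ) (n : ℕ) :
    ∑ u : Fin n → Y, x ᵥ* wordProd M u = x ᵥ* (∑ y, M y) ^ n := by
  rw [← vecMul_sum, sum_wordProd]

lemma sum_sum_abs_vecMul_wordProd [Fintype Y] (hM : ∀ y i j, 0 ≤ M y i j)
    (hstoch : (∑ y, M y) ∈ rowStochastic ℝ (Fin s)) {α : Fin s → ℝ}
    (hα : α ∈ stdSimplex ℝ (Fin s)) (n : ℕ) :
    ∑ u : Fin n → Y, ∑ i, |(α ᵥ* wordProd M u) i| = 1 := by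
  have habs : ∀ (u : Fin n → Y) i, |(α ᵥ* wordProd M u) i| = (α ᵥ* wordProd M u) i :=
    fun u i => abs_of_nonneg (vecMul_wordProd_nonneg M hM hα.1 u i)
  calc ∑ u : Fin n → Y, ∑ i, |(α ᵥ* wordProd M u) i|
      = ∑ i, (∑ u : Fin n → Y, α ᵥ* wordProd M u) i := by
        simp only [habs, Finset.sum_apply]
        exact Finset.sum_comm
    _ = 1 := by
        rw [sum_vecMul_wordProd, ← dotProduct_one]
        exact vecMul_dotProduct_one_eq_one_rowStochastic (pow_mem hstoch n)
          (by rw [dotProduct_one]; exact hα.2)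

end words

theorem stmt11_general (s : ℕ) (Y : Type*) [Fintype Y]
    (M : Y → Matrix (Fin s) (Fin s) ℝ)
    (hpos : ∀ y i j, 0 ≤ M y i j)
    (Mtot : Matrix (Fin s) (Fin s) ℝ) (hMtot : Mtot = ∑ y, M y)
    (hstoch : ∀ i, ∑ j, Mtot i j = 1)
    (π : Fin s → ℝ)
    (z ys : List Y)
    (S : Matrix (Fin s) (Fin s) ℝ) (hSdef : S = ((z ++ ys).map M).prod)
    (hπS : 0 < ∑ j, (π ᵥ* S) j)
    (w v : Fin s → ℝ) (hv : v ∈ stdSimplex ℝ (Fin s))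
    (δ : ℝ) (hδ0 : 0 ≤ δ) (hδ : δ < 1 / 4)
    (T : Matrix (Fin s) (Fin s) ℝ)
    (hT : ∀ β : Fin s → ℝ, ∑ j, |(β ᵥ* T) j| ≤ ∑ i, |β i|)
    (hdecomp : (∑ j, (π ᵥ* S) j)⁻¹ • S = (Matrix.of fun i j => w i * v j) + δ • T)
    (O : Set (Fin s → ℝ))
    (hO : ∀ β : Fin s → ℝ, (∑ i, |β i|) ≤ 1 →
      (1 + Real.sqrt δ * ∑ j, β j)⁻¹ • (v + Real.sqrt δ • β) ∈ O)
    (t : ℝ) (ht : t = 2 * Real.sqrt δ * ∑ j, (π ᵥ* S) j)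
    (m : ℕ) (hm : m = (z ++ ys).length) :
    ∀ α ∈ stdSimplex ℝ (Fin s), ∀ k : ℕ,
      (∑ j, (α ᵥ* (Mtot ^ k * S)) j) - t ≤ Pker M (k + m) α O := by
  intro α hα k
  subst hMtot ht hm
  set p := ∑ j, (π ᵥ* S) j
  have hMstoch : (∑ y, M y) ∈ rowStochastic ℝ (Fin s) :=
    mem_rowStochastic_iff_sum.mpr ⟨fun i j => by
      rw [Matrix.sum_apply]; exact Finset.sum_nonneg fun y _ => hpos y i j, hstoch⟩
  have hprefix (u : Fin k → Y) :=
    sum_vecMul_sub_le_massIn hπS hδ0 (by linarith) hv.2 hT hdecomp hO (α ᵥ* wordProd M u)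
  have hmass : ∑ u : Fin k → Y, ∑ j, ((α ᵥ* wordProd M u) ᵥ* S) j =
      ∑ j, (α ᵥ* ((∑ y, M y) ^ k * S)) j := by
    rw [Finset.sum_comm, ← vecMul_vecMul, ← sum_vecMul_wordProd, sum_vecMul]
    simp only [Finset.sum_apply]
  calc ∑ j, (α ᵥ* ((∑ y, M y) ^ k * S)) j - 2 * √δ * p
      = ∑ u : Fin k → Y, (∑ j, ((α ᵥ* wordProd M u) ᵥ* S) j -
          2 * √δ * p * ∑ i, |(α ᵥ* wordProd M u) i|) := by
        rw [Finset.sum_sub_distrib, hmass, ← Finset.mul_sum,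
          sum_sum_abs_vecMul_wordProd M hpos hMstoch hα, mul_one]
    _ ≤ ∑ u : Fin k → Y, massIn O ((α ᵥ* wordProd M u) ᵥ* S) :=
        Finset.sum_le_sum fun u _ => hprefix u
    _ ≤ Pker M (k + (z ++ ys).length) α O := by
        simpa only [wordProd_append, wordProd_get, ← hSdef, vecMul_vecMul] using
          sum_massIn_append_le_Pker M hpos O hα.1 fun i : Fin (z ++ ys).length => (z ++ ys)[i]

/-- The key transition estimate (3): with `S = M(z)M(yₙ)`, `m = |z| + |yₙ|`,
`t = 2√δₙ · π S e`, the decomposition `S/(π S e) = w v + δₙ Tₙ` with `‖Tₙ‖ ≤ 1`,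
`δₙ < 1/4`, and `𝒪` containing `(v + √δₙ β)/(1 + √δₙ β e)` for all `β` in the ℓ¹ unit
ball, we have `P^{k+m}(α, 𝒪) ≥ α Mᵏ S e − t` for every `α ∈ Δ` and every `k ≥ 0`. -/
theorem stmt11 (s : ℕ) (Y : Type*) [Fintype Y]
    (M : Y → Matrix (Fin s) (Fin s) ℝ)
    (hpos : ∀ y i j, 0 ≤ M y i j)
    (Mtot : Matrix (Fin s) (Fin s) ℝ) (hMtot : Mtot = ∑ y, M y)
    (hstoch : ∀ i, ∑ j, Mtot i j = 1)
    (π : Fin s → ℝ) (hπ : π ∈ stdSimplex ℝ (Fin s)) (hstat : π ᵥ* Mtot = π)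
    (z ys : List Y)
    (S : Matrix (Fin s) (Fin s) ℝ) (hSdef : S = ((z ++ ys).map M).prod)
    (hπS : 0 < ∑ j, (π ᵥ* S) j)
    (w v : Fin s → ℝ) (hw : π ⬝ᵥ w = 1) (hv : v ∈ stdSimplex ℝ (Fin s))
    (δ : ℝ) (hδ0 : 0 ≤ δ) (hδ : δ < 1 / 4)
    (T : Matrix (Fin s) (Fin s) ℝ)
    (hT : ∀ β : Fin s → ℝ, ∑ j, |(β ᵥ* T) j| ≤ ∑ i, |β i|)
    (hdecomp : (∑ j, (π ᵥ* S) j)⁻¹ • S = (Matrix.of fun i j => w i * v j) + δ • T)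
    (O : Set (Fin s → ℝ))
    (hO : ∀ β : Fin s → ℝ, (∑ i, |β i|) ≤ 1 →
      (1 + Real.sqrt δ * ∑ j, β j)⁻¹ • (v + Real.sqrt δ • β) ∈ O)
    (t : ℝ) (ht : t = 2 * Real.sqrt δ * ∑ j, (π ᵥ* S) j)
    (m : ℕ) (hm : m = (z ++ ys).length) :
    ∀ α ∈ stdSimplex ℝ (Fin s), ∀ k : ℕ,
      (∑ j, (α ᵥ* (Mtot ^ k * S)) j) - t ≤ Pker M (k + m) α O :=
  stmt11_general s Y M hpos Mtot hMtot hstoch π z ys S hSdef hπS w v hv δ hδ0 hδ T hT hdecomp O hO t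
    ht m hm
end
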